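/- Define maps on the free abelian groups Q'_n(A) = ℤ[A^{C_n}] by the Dixmier product: the bilinear map ℤ[A^{C_n}] ⊗ ℤ[B^{C_m}] → ℤ[(A⊗B)^{C_{n+m}}] sending generators f : C_n → A and g : C_m → B to the function C_{n+m} = C_n × C_m → A⊗B, (x,y) ↦ f(x)⊗g(y). This product is a chain map with respect to the differentials δ, i.e. it satisfies the Leibniz rule δ(f·g) = δ(f)·g + (−1)^{|f|} f·δ(g) on generators. -/

import Mathlib

/-! Identify `C_{a+b}` with `C_a × C_b`. Inserting a coordinate at position `i` of the product
cube inserts it into the first factor when `i ≤ a`, and at position `i - a` of the second factor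
otherwise. So the `i`-th summand `P_i - R_i - S_i` of `δ(f·g)` is the `i`-th (resp. `(i - a)`-th)
summand of `δ f` (resp. `δ g`) times the other factor, the `P_i` term by bilinearity of `⊗`;
the summands of the second block carry the extra sign `(-1)^a`. -/

set_option synthInstance.maxHeartbeats 1000000

open scoped TensorProduct

section QDelta

variable (A : Type) [AddCommGroup A]

def faceR (n : ℕ) (i : Fin (n + 1)) :
    FreeAbelianGroup ((Fin (n + 1) → Bool) → A) →+ FreeAbelianGroup ((Fin n → Bool) → A) :=
  FreeAbelianGroup.map (fun f c => f (i.insertNth false c))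

def faceS (n : ℕ) (i : Fin (n + 1)) :
    FreeAbelianGroup ((Fin (n + 1) → Bool) → A) →+ FreeAbelianGroup ((Fin n → Bool) → A) :=
  FreeAbelianGroup.map (fun f c => f (i.insertNth true c))

def faceP (n : ℕ) (i : Fin (n + 1)) :
    FreeAbelianGroup ((Fin (n + 1) → Bool) → A) →+ FreeAbelianGroup ((Fin n → Bool) → A) :=
  FreeAbelianGroup.map (fun f c => f (i.insertNth false c) + f (i.insertNth true c))

/-- MacLane's `Q`-construction differential `δ = Σ_{i=1}^{n+1} (-1)^i (P_i - R_i - S_i)`. -/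
def qDelta (n : ℕ) :
    FreeAbelianGroup ((Fin (n + 1) → Bool) → A) →+ FreeAbelianGroup ((Fin n → Bool) → A) :=
  ∑ i : Fin (n + 1), ((-1 : ℤ) ^ (i.1 + 1)) •
    (faceP A n i - faceR A n i - faceS A n i)

end QDelta

section Dixmier

variable (A B : Type) [AddCommGroup A] [AddCommGroup B]

/-- The Dixmier product of two generators: for `f : C_a → A` and `g : C_b → B`,
the function `C_c = C_a × C_b → A ⊗ B`, `(x, y) ↦ f x ⊗ g y`. -/
noncomputable def dixGen (a b c : ℕ) (h : c = a + b) (f : (Fin a → Bool) → A) (g : (Fin b → Bool) → B) :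
    (Fin c → Bool) → (A ⊗[ℤ] B) := fun z =>
  f (fun i => z (Fin.cast h.symm (Fin.castAdd b i))) ⊗ₜ[ℤ]
    g (fun j => z (Fin.cast h.symm (Fin.natAdd a j)))

/-- The Dixmier product `ℤ[A^{C_a}] ⊗ ℤ[B^{C_b}] → ℤ[(A⊗B)^{C_{a+b}}]`, as a
bilinear map, determined on generators by `dixGen`. -/
noncomputable def dix (a b c : ℕ) (h : c = a + b) :
    FreeAbelianGroup ((Fin a → Bool) → A) →+
      FreeAbelianGroup ((Fin b → Bool) → B) →+
        FreeAbelianGroup ((Fin c → Bool) → (A ⊗[ℤ] B)) :=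
  FreeAbelianGroup.lift (fun f =>
    FreeAbelianGroup.lift (fun g => FreeAbelianGroup.of (dixGen A B a b c h f g)))

lemma Fin.val_succAbove {n : ℕ} (p : Fin (n + 1)) (k : Fin n) :
    (p.succAbove k).1 = if k.1 < p.1 then k.1 else k.1 + 1 := by
  simp only [Fin.succAbove, Fin.lt_def, Fin.val_castSucc]
  split_ifs <;> rfl

lemma Fin.insertNth_comp_of_succAbove {α : Type*} {a K : ℕ} {I : Fin (K + 1)} {i : Fin (a + 1)}
    {e : Fin (a + 1) → Fin (K + 1)} {e' : Fin a → Fin K} (he : e i = I)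
    (hsucc : ∀ k, e (i.succAbove k) = I.succAbove (e' k)) (x : α) (z : Fin K → α) :
    (fun k => (Fin.insertNth I x z : Fin (K + 1) → α) (e k))
      = (Fin.insertNth i x fun k => z (e' k) : Fin (a + 1) → α) := by
  symm
  rw [Fin.insertNth_eq_iff]
  refine ⟨by simp [he], funext fun k => ?_⟩
  simp [Fin.removeNth, hsucc]

def qDeltaTerm (C : Type) [AddCommGroup C] (n : ℕ) (i : Fin (n + 1)) :
    FreeAbelianGroup ((Fin (n + 1) → Bool) → C) →+
      FreeAbelianGroup ((Fin n → Bool) → C) :=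
  faceP C n i - faceR C n i - faceS C n i

lemma qDelta_apply (C : Type) [AddCommGroup C] (n : ℕ)
    (x : FreeAbelianGroup ((Fin (n + 1) → Bool) → C)) :
    qDelta C n x = ∑ i, ((-1 : ℤ) ^ (i.1 + 1)) • qDeltaTerm C n i x := by
  simp only [qDelta, qDeltaTerm, AddMonoidHom.finsetSum_apply, AddMonoidHom.smul_apply]

lemma dix_of_of {a b c : ℕ} (h : c = a + b) (f : (Fin a → Bool) → A)
    (g : (Fin b → Bool) → B) :
    dix A B a b c h (.of f) (.of g) = .of (dixGen A B a b c h f g) := by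
  simp only [dix, FreeAbelianGroup.lift_apply_of]

lemma dix_qDelta_left {n b c : ℕ} (h : c = n + b)
    (x : FreeAbelianGroup ((Fin (n + 1) → Bool) → A))
    (y : FreeAbelianGroup ((Fin b → Bool) → B)) :
    dix A B n b c h (qDelta A n x) y
      = ∑ i, ((-1 : ℤ) ^ (i.1 + 1)) • dix A B n b c h (qDeltaTerm A n i x) y := by
  simp only [qDelta_apply, map_sum, map_zsmul, AddMonoidHom.finsetSum_apply,
    AddMonoidHom.smul_apply]

lemma dix_qDelta_right {a m c : ℕ} (h : c = a + m) (x : FreeAbelianGroup ((Fin a → Bool) → A))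
    (y : FreeAbelianGroup ((Fin (m + 1) → Bool) → B)) :
    dix A B a m c h x (qDelta B m y)
      = ∑ j, ((-1 : ℤ) ^ (j.1 + 1)) • dix A B a m c h x (qDeltaTerm B m j y) := by
  simp only [qDelta_apply, map_sum, map_zsmul]

lemma dixGen_add_left {a b c : ℕ} (h : c = a + b) (f₁ f₂ : (Fin a → Bool) → A)
    (g : (Fin b → Bool) → B) :
    dixGen A B a b c h (fun x => f₁ x + f₂ x) g
      = fun z => dixGen A B a b c h f₁ g z + dixGen A B a b c h f₂ g z :=
  funext fun _ => TensorProduct.add_tmul _ _ _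

lemma dixGen_add_right {a b c : ℕ} (h : c = a + b) (f : (Fin a → Bool) → A)
    (g₁ g₂ : (Fin b → Bool) → B) :
    dixGen A B a b c h f (fun x => g₁ x + g₂ x)
      = fun z => dixGen A B a b c h f g₁ z + dixGen A B a b c h f g₂ z :=
  funext fun _ => TensorProduct.tmul_add _ _ _

lemma dixGen_insertNth_left {n M K : ℕ} (hK : K = n + M) (h' : K + 1 = (n + 1) + M)
    (f : (Fin (n + 1) → Bool) → A) (g : (Fin M → Bool) → B)
    {I : Fin (K + 1)} {i : Fin (n + 1)} (hi : I.1 = i.1) (x : Bool)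
    (z : Fin K → Bool) :
    dixGen A B (n + 1) M (K + 1) h' f g (I.insertNth x z)
      = dixGen A B n M K hK (fun c => f (i.insertNth x c)) g z := by
  have hf : (fun k =>
        (I.insertNth x z : Fin (K + 1) → Bool) (Fin.cast h'.symm (Fin.castAdd M k)))
      = (i.insertNth x fun k => z (Fin.cast hK.symm (Fin.castAdd M k)) : Fin (n + 1) → Bool) :=
    Fin.insertNth_comp_of_succAbove (Fin.ext hi.symm)
      (fun k => Fin.ext (by simp only [Fin.val_succAbove, Fin.val_cast, Fin.val_castAdd, hi]))
      x z
  have hg : (fun j =>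
        (I.insertNth x z : Fin (K + 1) → Bool) (Fin.cast h'.symm (Fin.natAdd (n + 1) j)))
      = fun j => z (Fin.cast hK.symm (Fin.natAdd n j)) := by
    funext j
    have hj : Fin.cast h'.symm (Fin.natAdd (n + 1) j)
        = I.succAbove (Fin.cast hK.symm (Fin.natAdd n j)) := by
      ext
      simp only [Fin.val_succAbove, Fin.val_cast, Fin.val_natAdd]
      split_ifs <;> omega
    rw [hj, Fin.insertNth_apply_succAbove]
  simp only [dixGen, hf, hg]

lemma dixGen_insertNth_right {N m K : ℕ} (hK : K = N + m) (h' : K + 1 = N + (m + 1))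
    (f : (Fin N → Bool) → A) (g : (Fin (m + 1) → Bool) → B)
    {I : Fin (K + 1)} {j : Fin (m + 1)} (hj : I.1 = N + j.1) (x : Bool)
    (z : Fin K → Bool) :
    dixGen A B N (m + 1) (K + 1) h' f g (I.insertNth x z)
      = dixGen A B N m K hK f (fun c => g (j.insertNth x c)) z := by
  have hf : (fun k =>
        (I.insertNth x z : Fin (K + 1) → Bool) (Fin.cast h'.symm (Fin.castAdd (m + 1) k)))
      = fun k => z (Fin.cast hK.symm (Fin.castAdd m k)) := by
    funext k
    have hk : Fin.cast h'.symm (Fin.castAdd (m + 1) k)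
        = I.succAbove (Fin.cast hK.symm (Fin.castAdd m k)) := by
      ext
      simp only [Fin.val_succAbove, Fin.val_cast, Fin.val_castAdd]
      split_ifs <;> omega
    rw [hk, Fin.insertNth_apply_succAbove]
  have hg : (fun k =>
        (I.insertNth x z : Fin (K + 1) → Bool) (Fin.cast h'.symm (Fin.natAdd N k)))
      = (j.insertNth x fun k => z (Fin.cast hK.symm (Fin.natAdd N k)) : Fin (m + 1) → Bool) :=
    Fin.insertNth_comp_of_succAbove (Fin.ext (by simp [hj]))
      (fun k => Fin.ext (by
        simp only [Fin.val_succAbove, Fin.val_cast, Fin.val_natAdd, hj]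
        split_ifs <;> omega))
      x z
  simp only [dixGen, hf, hg]

lemma qDeltaTerm_dixGen_left {n M K : ℕ} (hK : K = n + M) (h' : K + 1 = (n + 1) + M)
    (f : (Fin (n + 1) → Bool) → A) (g : (Fin M → Bool) → B)
    {I : Fin (K + 1)} {i : Fin (n + 1)} (hi : I.1 = i.1) :
    qDeltaTerm (A ⊗[ℤ] B) K I (.of (dixGen A B (n + 1) M (K + 1) h' f g))
      = dix A B n M K hK (qDeltaTerm A n i (.of f)) (.of g) := by
  simp only [qDeltaTerm, faceP, faceR, faceS, AddMonoidHom.sub_apply,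
    FreeAbelianGroup.map_of_apply, map_sub, dix_of_of, dixGen_insertNth_left A B hK h' f g hi,
    dixGen_add_left]

lemma qDeltaTerm_dixGen_right {N m K : ℕ} (hK : K = N + m) (h' : K + 1 = N + (m + 1))
    (f : (Fin N → Bool) → A) (g : (Fin (m + 1) → Bool) → B)
    {I : Fin (K + 1)} {j : Fin (m + 1)} (hj : I.1 = N + j.1) :
    qDeltaTerm (A ⊗[ℤ] B) K I (.of (dixGen A B N (m + 1) (K + 1) h' f g))
      = dix A B N m K hK (.of f) (qDeltaTerm B m j (.of g)) := by
  simp only [qDeltaTerm, faceP, faceR, faceS, AddMonoidHom.sub_apply,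
    FreeAbelianGroup.map_of_apply, map_sub, dix_of_of, dixGen_insertNth_right A B hK h' f g hj,
    dixGen_add_right]

/-- The Leibniz rule for the Dixmier product on generators:
`δ(f·g) = δ(f)·g + (-1)^{|f|} f·δ(g)`, including the edge cases where one of the
two factors has degree `0` (in which case the corresponding `δ`-term is absent). -/
theorem dix_leibniz (n m : ℕ) :
    (∀ (f : (Fin (n + 1) → Bool) → A) (g : (Fin (m + 1) → Bool) → B),
      qDelta (A ⊗[ℤ] B) ((n + 1) + m)
          (dix A B (n + 1) (m + 1) ((n + 1) + (m + 1)) rfl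
            (FreeAbelianGroup.of f) (FreeAbelianGroup.of g))
        = dix A B n (m + 1) ((n + 1) + m) (by omega)
            (qDelta A n (FreeAbelianGroup.of f)) (FreeAbelianGroup.of g)
          + ((-1 : ℤ) ^ (n + 1)) •
            dix A B (n + 1) m ((n + 1) + m) rfl
              (FreeAbelianGroup.of f) (qDelta B m (FreeAbelianGroup.of g))) ∧
    (∀ (f : (Fin 0 → Bool) → A) (g : (Fin (m + 1) → Bool) → B),
      qDelta (A ⊗[ℤ] B) m
          (dix A B 0 (m + 1) (m + 1) (by omega)
            (FreeAbelianGroup.of f) (FreeAbelianGroup.of g))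
        = dix A B 0 m m (by omega)
            (FreeAbelianGroup.of f) (qDelta B m (FreeAbelianGroup.of g))) ∧
    (∀ (f : (Fin (n + 1) → Bool) → A) (g : (Fin 0 → Bool) → B),
      qDelta (A ⊗[ℤ] B) n
          (dix A B (n + 1) 0 (n + 1) rfl
            (FreeAbelianGroup.of f) (FreeAbelianGroup.of g))
        = dix A B n 0 n rfl
            (qDelta A n (FreeAbelianGroup.of f)) (FreeAbelianGroup.of g)) := by
  refine ⟨fun f g => ?_, fun f g => ?_, fun f g => ?_⟩
  · rw [dix_of_of, qDelta_apply, dix_qDelta_left, dix_qDelta_right, Finset.smul_sum]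
    refine (Fin.sum_univ_add (a := n + 1) (b := m + 1) _).trans (congrArg₂ (· + ·) ?_ ?_)
    · refine Finset.sum_congr rfl fun i _ => congrArg (_ • ·) ?_
      exact qDeltaTerm_dixGen_left A B (M := m + 1) (K := n + 1 + m) (by omega) rfl f g rfl
    · refine Finset.sum_congr rfl fun j _ => ?_
      rw [smul_smul, ← pow_add]
      exact congrArg (_ • ·) (qDeltaTerm_dixGen_right A B (N := n + 1) rfl rfl f g rfl)
  · rw [dix_of_of, qDelta_apply, dix_qDelta_right]
    refine Finset.sum_congr rfl fun j _ => congrArg (_ • ·) ?_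
    exact qDeltaTerm_dixGen_right A B (N := 0) (by omega) (by omega) f g (Nat.zero_add j.1).symm
  · rw [dix_of_of, qDelta_apply, dix_qDelta_left]
    refine Finset.sum_congr rfl fun i _ => congrArg (_ • ·) ?_
    exact qDeltaTerm_dixGen_left A B (M := 0) rfl rfl f g rfl

end Dixmier
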